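/- No shape expresses the TPF (?x,?y,c) as a shape fragment: for every IRI c and every shape φ, there exists an RDF graph G such that Frag(G,{φ}) ≠ {(s,q,o) ∈ G | o = c}. In particular, for a graph G = {(a,b,c),(a,b,d)} where the property b is not mentioned in φ and a,b,c,d are distinct, if (a,b,c) ∈ Frag(G,{φ}) then also (a,b,d) ∈ Frag(G,{φ}), contradicting equality with the TPF result. -/

import Mathlib

abbrev Node := ℕ
abbrev Triple := Node × Node × Node
abbrev RDFGraph := Set Triple

inductive PathExpr where
  | prop : Node → PathExpr
  | inv : PathExpr → PathExpr
  | comp : PathExpr → PathExpr → PathExpr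
  | union : PathExpr → PathExpr → PathExpr
  | star : PathExpr → PathExpr
  | opt : PathExpr → PathExpr

/-- Evaluation of a path expression on a graph, as a binary relation on nodes. -/
def evalPE : PathExpr → RDFGraph → Node → Node → Prop
  | .prop p, G, a, b => (a, p, b) ∈ G
  | .inv E, G, a, b => evalPE E G b a
  | .comp E₁ E₂, G, a, b => ∃ c, evalPE E₁ G a c ∧ evalPE E₂ G c b
  | .union E₁ E₂, G, a, b => evalPE E₁ G a b ∨ evalPE E₂ G a b
  | .star E, G, a, b => Relation.ReflTransGen (fun x y => evalPE E G x y) a b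
  | .opt E, G, a, b => a = b ∨ evalPE E G a b

/-- A step: a forward triple or a backward (reversed) triple. -/
inductive Step where
  | fwd : Triple → Step
  | bwd : Triple → Step

/-- The RDF triple underlying a step (reversing backward steps). -/
def Step.triple : Step → Triple
  | .fwd t => t
  | .bwd t => t

def Step.rev : Step → Step
  | .fwd t => .bwd t
  | .bwd t => .fwd t

/-- Reversal of a path. -/
def revPath (π : List Step) : List Step := (π.map Step.rev).reverse

/-- `IsPath E G a b π` : π is a path generated by E in G from a to b. -/
inductive IsPath : PathExpr → RDFGraph → Node → Node → List Step → Prop where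
  | prop {p : Node} {G : RDFGraph} {a b : Node} :
      (a, p, b) ∈ G → IsPath (.prop p) G a b [.fwd (a, p, b)]
  | inv {E G a b π} : IsPath E G b a π → IsPath (.inv E) G a b (revPath π)
  | comp {E₁ E₂ G a c b π₁ π₂} : IsPath E₁ G a c π₁ → IsPath E₂ G c b π₂ →
      IsPath (.comp E₁ E₂) G a b (π₁ ++ π₂)
  | unionL {E₁ E₂ G a b π} : IsPath E₁ G a b π → IsPath (.union E₁ E₂) G a b π
  | unionR {E₁ E₂ G a b π} : IsPath E₂ G a b π → IsPath (.union E₁ E₂) G a b π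
  | opt {E G a b π} : IsPath E G a b π → IsPath (.opt E) G a b π
  | starOne {E G a b π} : IsPath E G a b π → IsPath (.star E) G a b π
  | starStep {E G a c b π₁ π₂} : IsPath E G a c π₁ → IsPath (.star E) G c b π₂ →
      IsPath (.star E) G a b (π₁ ++ π₂)

/-- graph(paths(E,G,a,b)) : the subgraph traced out by all E-paths from a to b. -/
def graphOfPaths (E : PathExpr) (G : RDFGraph) (a b : Node) : RDFGraph :=
  {t | ∃ π, IsPath E G a b π ∧ ∃ st ∈ π, st.triple = t}

/-- graph(paths(E,G)) : the subgraph traced out by all E-paths in G. -/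
def graphOfAllPaths (E : PathExpr) (G : RDFGraph) : RDFGraph :=
  {t | ∃ a b, t ∈ graphOfPaths E G a b}

inductive PathOrId where
  | id : PathOrId
  | expr : PathExpr → PathOrId

inductive Shape where
  | top : Shape
  | bot : Shape
  | test : (Node → Prop) → Shape
  | hasValue : Node → Shape
  | eq : PathOrId → Node → Shape
  | disj : PathOrId → Node → Shape
  | closed : Finset Node → Shape
  | lessThan : PathExpr → Node → Shape
  | lessThanEq : PathExpr → Node → Shape
  | uniqueLang : PathExpr → Shape
  | not : Shape → Shape
  | and : Shape → Shape → Shape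
  | or : Shape → Shape → Shape
  | geq : ℕ → PathExpr → Shape → Shape
  | leq : ℕ → PathExpr → Shape → Shape
  | all : PathExpr → Shape → Shape

/-- Context: the strict partial order `<` on literals and the
language-tag equivalence `∼`. -/
structure Ctx where
  lt : Node → Node → Prop
  sim : Node → Node → Prop

/-- [[F]]_G(v) for F a path expression or `id`. -/
def evalF : PathOrId → RDFGraph → Node → Set Node
  | .id, _, v => {v}
  | .expr E, G, v => {b | evalPE E G v b}

/-- The set of p-successors of v in G. -/
def psucc (G : RDFGraph) (v p : Node) : Set Node := {b | (v, p, b) ∈ G}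

/-- Conformance of a focus node to a shape (Table 1). -/
def Conforms (C : Ctx) (G : RDFGraph) : Shape → Node → Prop
  | .top, _ => True
  | .bot, _ => False
  | .test t, v => t v
  | .hasValue c, v => v = c
  | .eq F p, v => evalF F G v = psucc G v p
  | .disj F p, v => evalF F G v ∩ psucc G v p = ∅
  | .closed P, v => ∀ q b, (v, q, b) ∈ G → q ∈ P
  | .lessThan E p, v => ∀ b c, evalPE E G v b → (v, p, c) ∈ G → C.lt b c
  | .lessThanEq E p, v => ∀ b c, evalPE E G v b → (v, p, c) ∈ G → (C.lt b c ∨ b = c)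
  | .uniqueLang E, v => ∀ b c, evalPE E G v b → evalPE E G v c → b ≠ c → ¬ C.sim b c
  | .not φ, v => ¬ Conforms C G φ v
  | .and φ ψ, v => Conforms C G φ v ∧ Conforms C G ψ v
  | .or φ ψ, v => Conforms C G φ v ∨ Conforms C G ψ v
  | .geq n E ψ, v => ∃ s : Finset Node, s.card = n ∧ ∀ b ∈ s, evalPE E G v b ∧ Conforms C G ψ b
  | .leq n E ψ, v => ∀ s : Finset Node, (∀ b ∈ s, evalPE E G v b ∧ Conforms C G ψ b) → s.card ≤ n
  | .all E ψ, v => ∀ b, evalPE E G v b → Conforms C G ψ b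

/-- Atomic shapes. -/
def Shape.Atomic : Shape → Prop
  | .not _ => False
  | .and _ _ => False
  | .or _ _ => False
  | .geq _ _ _ => False
  | .leq _ _ _ => False
  | .all _ _ => False
  | _ => True

/-- Negation normal form: negation applied only to atomic shapes. -/
def IsNNF : Shape → Prop
  | .not φ => φ.Atomic
  | .and φ ψ => IsNNF φ ∧ IsNNF ψ
  | .or φ ψ => IsNNF φ ∧ IsNNF ψ
  | .geq _ _ ψ => IsNNF ψ
  | .leq _ _ ψ => IsNNF ψ
  | .all _ ψ => IsNNF ψ
  | _ => True

mutual
/-- The φ-neighborhood B(v,G,φ) of a node (Table 2); empty when v does not conform. -/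
def B (C : Ctx) (G : RDFGraph) : Shape → Node → RDFGraph
  | .not φ, v => Bneg C G φ v
  | .and φ ψ, v => {t | Conforms C G (.and φ ψ) v ∧ (t ∈ B C G φ v ∨ t ∈ B C G ψ v)}
  | .or φ ψ, v => {t | Conforms C G (.or φ ψ) v ∧ (t ∈ B C G φ v ∨ t ∈ B C G ψ v)}
  | .geq n E ψ, v => {t | Conforms C G (.geq n E ψ) v ∧
      ∃ x, evalPE E G v x ∧ Conforms C G ψ x ∧ (t ∈ graphOfPaths E G v x ∨ t ∈ B C G ψ x)}
  | .leq n E ψ, v => {t | Conforms C G (.leq n E ψ) v ∧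
      ∃ x, evalPE E G v x ∧ ¬ Conforms C G ψ x ∧ (t ∈ graphOfPaths E G v x ∨ t ∈ Bneg C G ψ x)}
  | .all E ψ, v => {t | Conforms C G (.all E ψ) v ∧
      ∃ x, evalPE E G v x ∧ (t ∈ graphOfPaths E G v x ∨ t ∈ B C G ψ x)}
  | .eq (.expr E) p, v => {t | Conforms C G (.eq (.expr E) p) v ∧
      ∃ x, t ∈ graphOfPaths (.union E (.prop p)) G v x}
  | .eq .id p, v => {t | Conforms C G (.eq .id p) v ∧ t = (v, p, v)}
  | _, _ => ∅

/-- Neighborhood of v for the negation normal form of ¬φ (Table 2, negated cases). -/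
def Bneg (C : Ctx) (G : RDFGraph) : Shape → Node → RDFGraph
  | .not φ, v => B C G φ v
  | .and φ ψ, v => {t | ¬ Conforms C G (.and φ ψ) v ∧ (t ∈ Bneg C G φ v ∨ t ∈ Bneg C G ψ v)}
  | .or φ ψ, v => {t | ¬ Conforms C G (.or φ ψ) v ∧ (t ∈ Bneg C G φ v ∨ t ∈ Bneg C G ψ v)}
  | .geq n E ψ, v => {t | ¬ Conforms C G (.geq n E ψ) v ∧
      ∃ x, evalPE E G v x ∧ ¬ Conforms C G ψ x ∧ (t ∈ graphOfPaths E G v x ∨ t ∈ Bneg C G ψ x)}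
  | .leq n E ψ, v => {t | ¬ Conforms C G (.leq n E ψ) v ∧
      ∃ x, evalPE E G v x ∧ Conforms C G ψ x ∧ (t ∈ graphOfPaths E G v x ∨ t ∈ B C G ψ x)}
  | .all E ψ, v => {t | ¬ Conforms C G (.all E ψ) v ∧
      ∃ x, evalPE E G v x ∧ ¬ Conforms C G ψ x ∧ (t ∈ graphOfPaths E G v x ∨ t ∈ Bneg C G ψ x)}
  | .eq (.expr E) p, v => {t | ¬ Conforms C G (.eq (.expr E) p) v ∧
      ((∃ x, (v, p, x) ∉ G ∧ t ∈ graphOfPaths E G v x) ∨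
       (∃ x, t = (v, p, x) ∧ (v, p, x) ∈ G ∧ ¬ evalPE E G v x))}
  | .eq .id p, v => {t | ¬ Conforms C G (.eq .id p) v ∧
      ∃ x, t = (v, p, x) ∧ (v, p, x) ∈ G ∧ x ≠ v}
  | .disj (.expr E) p, v => {t | ¬ Conforms C G (.disj (.expr E) p) v ∧
      ∃ x, evalPE E G v x ∧ (v, p, x) ∈ G ∧ (t ∈ graphOfPaths E G v x ∨ t = (v, p, x))}
  | .disj .id p, v => {t | ¬ Conforms C G (.disj .id p) v ∧ t = (v, p, v)}
  | .lessThan E p, v => {t | ¬ Conforms C G (.lessThan E p) v ∧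
      ∃ x y, evalPE E G v x ∧ (v, p, y) ∈ G ∧ ¬ C.lt x y ∧
        (t ∈ graphOfPaths E G v x ∨ t = (v, p, y))}
  | .lessThanEq E p, v => {t | ¬ Conforms C G (.lessThanEq E p) v ∧
      ∃ x y, evalPE E G v x ∧ (v, p, y) ∈ G ∧ ¬ (C.lt x y ∨ x = y) ∧
        (t ∈ graphOfPaths E G v x ∨ t = (v, p, y))}
  | .uniqueLang E, v => {t | ¬ Conforms C G (.uniqueLang E) v ∧
      ∃ y x, evalPE E G v y ∧ evalPE E G v x ∧ x ≠ y ∧ C.sim x y ∧ t ∈ graphOfPaths E G v y}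
  | .closed P, v => {t | ¬ Conforms C G (.closed P) v ∧
      ∃ q x, t = (v, q, x) ∧ (v, q, x) ∈ G ∧ q ∉ P}
  | _, _ => ∅
end

/-- The shape fragment of G for a set S of request shapes. -/
def Frag (C : Ctx) (G : RDFGraph) (S : Set Shape) : RDFGraph :=
  {t | ∃ v φ, φ ∈ S ∧ t ∈ B C G φ v}

/-- A shape definition: name, shape expression, target expression. -/
structure ShapeDef where
  name : Node
  shape : Shape
  target : Shape

/-- G conforms to the schema H. -/
def SchemaConforms (C : Ctx) (G : RDFGraph) (H : List ShapeDef) : Prop :=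
  ∀ d ∈ H, ∀ a : Node, Conforms C G d.target a → Conforms C G d.shape a

/-- The request shapes derived from a schema: each shape conjoined with its target. -/
def schemaShapes (H : List ShapeDef) : Set Shape :=
  {φ | ∃ d ∈ H, φ = Shape.and d.shape d.target}

/-- The shape fragment of G for a schema H. -/
def FragH (C : Ctx) (G : RDFGraph) (H : List ShapeDef) : RDFGraph :=
  Frag C G (schemaShapes H)

/-- A shape is monotone if conformance is preserved under adding triples. -/
def MonotoneShape (C : Ctx) (φ : Shape) : Prop :=
  ∀ G G' : RDFGraph, G ⊆ G' → ∀ v, Conforms C G φ v → Conforms C G' φ v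

/-- Properties mentioned in a path expression. -/
def PathExpr.props : PathExpr → Set Node
  | .prop p => {p}
  | .inv E => E.props
  | .comp E₁ E₂ => E₁.props ∪ E₂.props
  | .union E₁ E₂ => E₁.props ∪ E₂.props
  | .star E => E.props
  | .opt E => E.props

def PathOrId.props : PathOrId → Set Node
  | .id => ∅
  | .expr E => E.props

/-- Properties mentioned in a shape. -/
def Shape.props : Shape → Set Node
  | .top => ∅
  | .bot => ∅
  | .test _ => ∅
  | .hasValue _ => ∅
  | .eq F p => F.props ∪ {p}
  | .disj F p => F.props ∪ {p}
  | .closed P => ↑P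
  | .lessThan E p => E.props ∪ {p}
  | .lessThanEq E p => E.props ∪ {p}
  | .uniqueLang E => E.props
  | .not φ => φ.props
  | .and φ ψ => φ.props ∪ ψ.props
  | .or φ ψ => φ.props ∪ ψ.props
  | .geq _ E ψ => E.props ∪ ψ.props
  | .leq _ E ψ => E.props ∪ ψ.props
  | .all E ψ => E.props ∪ ψ.props

/- Proof idea: a shape neighborhood only picks up a triple whose property φ does not mention
through a `closed` constraint, and that constraint collects all such triples of its focus node at
once.  So if φ does not mention b and G = {(0,b,c), (0,b,d)}, the fragment contains (0,b,c) only
together with (0,b,d), whereas the triple pattern (?x,?y,c) selects only the former. -/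

@[simp]
lemma Step.triple_rev (st : Step) : st.rev.triple = st.triple := by
  cases st <;> rfl

lemma IsPath.prop_mem_props {E : PathExpr} {G : RDFGraph} {a b : Node} {π : List Step}
    (h : IsPath E G a b π) : ∀ st ∈ π, st.triple.2.1 ∈ E.props := by
  induction h with
  | prop _ => simp [Step.triple, PathExpr.props]
  | inv _ ih =>
    simp only [revPath, List.mem_reverse, List.mem_map, forall_exists_index, and_imp]
    rintro _ st hst rfl
    simpa [PathExpr.props] using ih st hst
  | comp _ _ ih₁ ih₂ =>
    simp only [List.mem_append]
    exact fun st hst => hst.elim (.inl <| ih₁ st ·) (.inr <| ih₂ st ·)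
  | unionL _ ih => exact fun st hst => .inl (ih st hst)
  | unionR _ ih => exact fun st hst => .inr (ih st hst)
  | opt _ ih | starOne _ ih => exact ih
  | starStep _ _ ih₁ ih₂ =>
    simp only [List.mem_append]
    exact fun st hst => hst.elim (ih₁ st) (ih₂ st)

lemma prop_mem_props_of_mem_graphOfPaths {E : PathExpr} {G : RDFGraph} {a b : Node}
    {t : Triple} (h : t ∈ graphOfPaths E G a b) : t.2.1 ∈ E.props := by
  obtain ⟨π, hπ, st, hst, rfl⟩ := h
  exact hπ.prop_mem_props st hst

lemma PathExpr.props_finite (E : PathExpr) : E.props.Finite := by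
  induction E <;> simp_all [PathExpr.props]

lemma Shape.props_finite (φ : Shape) : φ.props.Finite := by
  have hF (F : PathOrId) : F.props.Finite := by
    cases F <;> simp [PathOrId.props, PathExpr.props_finite]
  induction φ <;> simp_all [Shape.props, PathExpr.props_finite]

lemma Shape.prop_mem_props_of_mem_B {C : Ctx} {G : RDFGraph} {φ : Shape} {v : Node}
    {t : Triple} (hφ : φ.Atomic) (ht : t ∈ B C G φ v) : t.2.1 ∈ φ.props := by
  cases φ with
  | eq F q =>
    cases F with
    | id =>
      obtain ⟨-, rfl⟩ := ht
      exact .inr rfl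
    | expr E =>
      obtain ⟨-, x, hx⟩ := ht
      exact prop_mem_props_of_mem_graphOfPaths hx
  | not _ | and _ _ | or _ _ | geq _ _ _ | leq _ _ _ | all _ _ => exact hφ.elim
  | _ => simp [B] at ht

lemma Shape.prop_mem_props_of_mem_Bneg {C : Ctx} {G : RDFGraph} {φ : Shape} {v : Node}
    {t : Triple} (hφ : φ.Atomic) (hclosed : ∀ P, φ ≠ .closed P) (ht : t ∈ Bneg C G φ v) :
    t.2.1 ∈ φ.props := by
  have of_path {E : PathExpr} {a b : Node} (h : t ∈ graphOfPaths E G a b) :=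
    prop_mem_props_of_mem_graphOfPaths h
  cases φ with
  | eq F q =>
    cases F with
    | id =>
      obtain ⟨-, x, rfl, -, -⟩ := ht
      exact .inr rfl
    | expr E =>
      obtain ⟨-, ⟨x, -, hx⟩ | ⟨x, rfl, -, -⟩⟩ := ht
      exacts [.inl (of_path hx), .inr rfl]
  | disj F q =>
    cases F with
    | id =>
      obtain ⟨-, rfl⟩ := ht
      exact .inr rfl
    | expr E =>
      obtain ⟨-, x, -, -, hx | rfl⟩ := ht
      exacts [.inl (of_path hx), .inr rfl]
  | lessThan E q | lessThanEq E q =>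
    obtain ⟨-, x, y, -, -, -, hx | rfl⟩ := ht
    exacts [.inl (of_path hx), .inr rfl]
  | uniqueLang E =>
    obtain ⟨-, y, x, -, -, -, -, hy⟩ := ht
    exact of_path hy
  | closed P => exact absurd rfl (hclosed P)
  | not _ | and _ _ | or _ _ | geq _ _ _ | leq _ _ _ | all _ _ => exact hφ.elim
  | _ => simp [Bneg] at ht

def SaturatedAt (G : RDFGraph) (p : Node) (N : RDFGraph) : Prop :=
  ∀ ⦃s o o' : Node⦄, (s, p, o) ∈ N → (s, p, o') ∈ G → (s, p, o') ∈ N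

lemma saturatedAt_of_forall_prop_mem {G N : RDFGraph} {S : Set Node} {p : Node}
    (h : ∀ t ∈ N, t.2.1 ∈ S) (hp : p ∉ S) : SaturatedAt G p N :=
  fun _ _ _ hN _ => absurd (h _ hN) hp

lemma saturatedAt_Bneg_closed (C : Ctx) {G : RDFGraph} {P : Finset Node} {p : Node} (hp : p ∉ P)
    (v : Node) : SaturatedAt G p (Bneg C G (.closed P) v) := by
  rintro s o o' ⟨hnc, q, x, hx, -, -⟩ hG
  cases hx
  exact ⟨hnc, p, o', rfl, hG, hp⟩

theorem saturatedAt_B_and_Bneg (C : Ctx) (G : RDFGraph) {p : Node} (φ : Shape) (hp : p ∉ φ.props)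
    (v : Node) : SaturatedAt G p (B C G φ v) ∧ SaturatedAt G p (Bneg C G φ v) := by
  have off_path {E : PathExpr} {a b s o : Node} (hE : p ∉ E.props) :
      ((s, p, o) : Triple) ∉ graphOfPaths E G a b :=
    fun h => hE (prop_mem_props_of_mem_graphOfPaths h)
  induction φ generalizing v with
  | not ψ ih => exact (ih hp v).symm
  | and ψ χ ihψ ihχ | or ψ χ ihψ ihχ =>
    obtain ⟨hψ, hχ⟩ := not_or.1 hp
    exact ⟨fun s o o' ⟨hc, h⟩ hG => ⟨hc, h.imp ((ihψ hψ v).1 · hG) ((ihχ hχ v).1 · hG)⟩,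
      fun s o o' ⟨hc, h⟩ hG => ⟨hc, h.imp ((ihψ hψ v).2 · hG) ((ihχ hχ v).2 · hG)⟩⟩
  | geq n E ψ ih =>
    obtain ⟨hE, hψ⟩ := not_or.1 hp
    refine ⟨fun s o o' ⟨hc, x, hx, hψx, h⟩ hG => ?_, fun s o o' ⟨hc, x, hx, hψx, h⟩ hG => ?_⟩
    · exact ⟨hc, x, hx, hψx, .inr ((ih hψ x).1 (h.resolve_left (off_path hE)) hG)⟩
    · exact ⟨hc, x, hx, hψx, .inr ((ih hψ x).2 (h.resolve_left (off_path hE)) hG)⟩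
  | leq n E ψ ih =>
    obtain ⟨hE, hψ⟩ := not_or.1 hp
    refine ⟨fun s o o' ⟨hc, x, hx, hψx, h⟩ hG => ?_, fun s o o' ⟨hc, x, hx, hψx, h⟩ hG => ?_⟩
    · exact ⟨hc, x, hx, hψx, .inr ((ih hψ x).2 (h.resolve_left (off_path hE)) hG)⟩
    · exact ⟨hc, x, hx, hψx, .inr ((ih hψ x).1 (h.resolve_left (off_path hE)) hG)⟩
  | all E ψ ih =>
    obtain ⟨hE, hψ⟩ := not_or.1 hp
    refine ⟨fun s o o' ⟨hc, x, hx, h⟩ hG => ?_, fun s o o' ⟨hc, x, hx, hψx, h⟩ hG => ?_⟩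
    · exact ⟨hc, x, hx, .inr ((ih hψ x).1 (h.resolve_left (off_path hE)) hG)⟩
    · exact ⟨hc, x, hx, hψx, .inr ((ih hψ x).2 (h.resolve_left (off_path hE)) hG)⟩
  | closed P =>
    exact ⟨saturatedAt_of_forall_prop_mem (fun _ => Shape.prop_mem_props_of_mem_B trivial) hp,
      saturatedAt_Bneg_closed C hp v⟩
  | _ =>
    exact ⟨saturatedAt_of_forall_prop_mem (fun _ => Shape.prop_mem_props_of_mem_B trivial) hp,
      saturatedAt_of_forall_prop_mem
        (fun _ => Shape.prop_mem_props_of_mem_Bneg trivial (by simp)) hp⟩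

/-- no shape expresses the TPF (?x,?y,c) as a shape fragment. -/
theorem tpf_object_inexpressible (c : Node) (C : Ctx) (φ : Shape) :
    ∃ G : RDFGraph, Frag C G {φ} ≠ {t ∈ G | t.2.2 = c} := by
  obtain ⟨b, hb⟩ := φ.props_finite.infinite_compl.nonempty
  set G : RDFGraph := {(0, b, c), (0, b, c + 1)}
  refine ⟨G, fun hFrag => ?_⟩
  obtain ⟨v, ψ, hψ, hc⟩ : ((0, b, c) : Triple) ∈ Frag C G {φ} := hFrag ▸ ⟨.inl rfl, rfl⟩
  rw [Set.mem_singleton_iff.1 hψ] at hc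
  have hd : ((0, b, c + 1) : Triple) ∈ Frag C G {φ} :=
    ⟨v, φ, rfl, (saturatedAt_B_and_Bneg C G φ hb v).1 hc (.inr rfl)⟩
  exact c.succ_ne_self (hFrag ▸ hd).2
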